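/- arXiv:1908.11576 — 10 statements merged into one kernel-verified Lean document; each statement's English description precedes it below -/
import Mathlib

section
/- Let T : ℝⁿ → ℝⁿ be linear and α-averaged for some α ∈ (0,1). Then the operator norm of T composed with the orthogonal projection onto (Fix T)^⊥ is strictly less than 1, i.e., ‖T ∘ P_{(Fix T)^⊥}‖ < 1. -/
/-!
For `T = (1 - α) Id + α R` with `R` nonexpansive and `R 0 = 0`, the convex-combination identity
gives `‖T u‖² + α (1 - α) ‖u - R u‖² ≤ ‖u‖²`. So `T` is nonexpansive and fixes every vector whose
norm it preserves. Then `T ∘ P_{Fᗮ}` strictly shrinks every nonzero `x`: equality would make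
`P_{Fᗮ} x` a fixed point, i.e. an element of `F ∩ Fᗮ = 0`, while `‖P_{Fᗮ} x‖ = ‖x‖`. Compactness
of the unit sphere turns this pointwise strict bound into a strict bound on the operator norm.
-/

open Set

theorem norm_one_sub_smul_add_smul_sq {E : Type*} [NormedAddCommGroup E] [InnerProductSpace ℝ E]
    (α : ℝ) (u v : E) :
    ‖(1 - α) • u + α • v‖ ^ 2 + α * (1 - α) * ‖u - v‖ ^ 2 = (1 - α) * ‖u‖ ^ 2 + α * ‖v‖ ^ 2 := by
  rw [norm_add_sq_real, norm_sub_sq_real, norm_smul, norm_smul, real_inner_smul_left,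
    real_inner_smul_right, mul_pow, mul_pow, Real.norm_eq_abs, Real.norm_eq_abs, sq_abs, sq_abs]
  ring

namespace ContinuousLinearMap

theorem opNorm_lt_of_norm_apply_lt {E F : Type*} [NormedAddCommGroup E] [InnerProductSpace ℝ E]
    [FiniteDimensional ℝ E] [NormedAddCommGroup F] [NormedSpace ℝ F] (S : E →L[ℝ] F) {c : ℝ}
    (hc : 0 < c) (hS : ∀ x, x ≠ 0 → ‖S x‖ < c * ‖x‖) : ‖S‖ < c := by
  rw [← S.sSup_sphere_eq_norm]
  rcases (Metric.sphere (0 : E) 1).eq_empty_or_nonempty with hempty | hne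
  · simpa [hempty] using hc
  obtain ⟨x, hx, hmax⟩ := (isCompact_sphere (0 : E) 1).exists_isMaxOn hne
    (continuous_norm.comp S.continuous).continuousOn
  have hx1 : ‖x‖ = 1 := mem_sphere_zero_iff_norm.mp hx
  calc sSup ((fun x => ‖S x‖) '' Metric.sphere 0 1) ≤ ‖S x‖ :=
        csSup_le (hne.image _) (forall_mem_image.mpr hmax)
    _ < c := by simpa [hx1] using hS x (by rintro rfl; simp at hx1)

variable {E : Type*} [NormedAddCommGroup E] [InnerProductSpace ℝ E]

section Averaged

variable {T : E →L[ℝ] E} {α : ℝ} {R : E → E} (hα : α ∈ Ioo 0 1)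
  (hR : ∀ u v, ‖R u - R v‖ ≤ ‖u - v‖) (hTR : ∀ u, T u = (1 - α) • u + α • R u)
include hα hR hTR

theorem norm_apply_sq_add_le_of_averaged (u : E) :
    ‖T u‖ ^ 2 + α * (1 - α) * ‖u - R u‖ ^ 2 ≤ ‖u‖ ^ 2 := by
  have hR0 : R 0 = 0 := by
    simpa [hα.1.ne'] using (hTR 0).symm
  have hRu : ‖R u‖ ≤ ‖u‖ := by simpa [hR0] using hR u 0
  have hRu_sq : ‖R u‖ ^ 2 ≤ ‖u‖ ^ 2 := pow_le_pow_left₀ (norm_nonneg _) hRu 2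
  rw [hTR, norm_one_sub_smul_add_smul_sq]
  nlinarith [hα.1]

theorem norm_apply_le_of_averaged (u : E) : ‖T u‖ ≤ ‖u‖ := by
  have hpos : 0 ≤ α * (1 - α) := mul_nonneg hα.1.le (sub_nonneg.mpr hα.2.le)
  have := norm_apply_sq_add_le_of_averaged hα hR hTR u
  exact pow_le_pow_iff_left₀ (norm_nonneg _) (norm_nonneg _) two_ne_zero |>.mp
    (by nlinarith [sq_nonneg ‖u - R u‖])

theorem apply_eq_self_of_norm_apply_eq_of_averaged {u : E} (hu : ‖T u‖ = ‖u‖) : T u = u := by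
  have hpos : 0 < α * (1 - α) := mul_pos hα.1 (sub_pos.mpr hα.2)
  have h := norm_apply_sq_add_le_of_averaged hα hR hTR u
  rw [hu] at h
  have hRu : R u = u := by
    have : ‖u - R u‖ ^ 2 = 0 := le_antisymm (by nlinarith) (sq_nonneg _)
    simpa [sub_eq_zero, eq_comm] using this
  rw [hTR, hRu, ← add_smul, sub_add_cancel, one_smul]

end Averaged

theorem norm_apply_starProjection_orthogonal_lt [FiniteDimensional ℝ E] {T : E →L[ℝ] E}
    (hT : ∀ u, ‖T u‖ ≤ ‖u‖) (hT_eq : ∀ u, ‖T u‖ = ‖u‖ → T u = u) {F : Submodule ℝ E}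
    (hF : ∀ u, T u = u → u ∈ F) {x : E} (hx : x ≠ 0) : ‖T (Fᗮ.starProjection x)‖ < ‖x‖ := by
  set p := Fᗮ.starProjection x
  have hp : ‖p‖ ≤ ‖x‖ := Fᗮ.norm_starProjection_apply_le x
  refine lt_of_le_of_ne ((hT p).trans hp) fun h => hx ?_
  have hpF : p ∈ F := hF p (hT_eq p (le_antisymm (hT p) (h ▸ hp)))
  have hp0 : p = 0 := (Submodule.mem_bot ℝ).mp <|
    F.inf_orthogonal_eq_bot.le ⟨hpF, Fᗮ.starProjection_apply_mem x⟩
  exact norm_eq_zero.mp (by simpa [hp0] using h.symm)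

end ContinuousLinearMap

/-- If `T : ℝⁿ → ℝⁿ` is linear and `α`-averaged with `α ∈ (0,1)`, then
`‖T ∘ P_{(Fix T)ᗮ}‖ < 1`. -/
theorem stmt1 {n : ℕ}
    (T : EuclideanSpace ℝ (Fin n) →L[ℝ] EuclideanSpace ℝ (Fin n))
    (α : ℝ) (hα : α ∈ Set.Ioo (0 : ℝ) 1)
    (hav : ∃ R : EuclideanSpace ℝ (Fin n) → EuclideanSpace ℝ (Fin n),
      (∀ u v, ‖R u - R v‖ ≤ ‖u - v‖) ∧ ∀ u, T u = (1 - α) • u + α • R u)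
    (F : Submodule ℝ (EuclideanSpace ℝ (Fin n)))
    (hF : ∀ u, u ∈ F ↔ T u = u) :
    ‖T.comp (Fᗮ.subtypeL.comp (Submodule.orthogonalProjectionOnto Fᗮ))‖ < 1 := by
  obtain ⟨R, hR, hTR⟩ := hav
  refine ContinuousLinearMap.opNorm_lt_of_norm_apply_lt _ one_pos fun x hx => ?_
  rw [one_mul]
  exact ContinuousLinearMap.norm_apply_starProjection_orthogonal_lt
    (ContinuousLinearMap.norm_apply_le_of_averaged hα hR hTR)
    (fun _ => ContinuousLinearMap.apply_eq_self_of_norm_apply_eq_of_averaged hα hR hTR)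
    (fun u => (hF u).mpr) hx
end

section
/- Let U and V be closed linear subspaces of a real Hilbert space H, let T = T_{V,U} be the Douglas–Rachford operator, and let x ∈ H. Then P_{U∩V}(x) = P_{Fix T}(x) if and only if x belongs to the closure of U + V. -/
/-!
`T y = y` means `P_V (2 P_U y - y) = P_U y`, which forces `P_U y ∈ U ⊓ V` and `y - P_U y ⟂ U, V`.
So the fixed points of `T` are exactly `(U ⊓ V) ⊕ (U ⊔ V)ᗮ`, an orthogonal sum, and
`P_{Fix T} = P_{U ⊓ V} + P_{(U ⊔ V)ᗮ}`. Hence `P_{U ⊓ V} x = P_{Fix T} x` iff `P_{(U ⊔ V)ᗮ} x = 0`,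
i.e. iff `x ∈ (U ⊔ V)ᗮᗮ = closure (U ⊔ V)`.
-/

namespace Submodule

variable {𝕜 E : Type*} [RCLike 𝕜] [NormedAddCommGroup E] [InnerProductSpace 𝕜 E]

theorem IsOrtho.starProjection_sup {K L : Submodule 𝕜 E} [K.HasOrthogonalProjection]
    [L.HasOrthogonalProjection] [(K ⊔ L).HasOrthogonalProjection] (hKL : K ⟂ L) (x : E) :
    (K ⊔ L).starProjection x = K.starProjection x + L.starProjection x := by
  refine eq_starProjection_of_mem_orthogonal (add_mem_sup (coe_mem _) (coe_mem _)) ?_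
  rw [← inf_orthogonal]
  constructor
  · rw [← sub_sub]
    exact sub_mem (sub_starProjection_mem_orthogonal x) (hKL.symm.le (coe_mem _))
  · rw [sub_add_eq_sub_sub_swap]
    exact sub_mem (sub_starProjection_mem_orthogonal x) (hKL.le (coe_mem _))

end Submodule

section DouglasRachford

open Submodule

variable {H : Type*} [NormedAddCommGroup H] [InnerProductSpace ℝ H]

noncomputable def douglasRachford (U V : Submodule ℝ H) [U.HasOrthogonalProjection]
    [V.HasOrthogonalProjection] (y : H) : H :=
  V.starProjection ((2 : ℝ) • U.starProjection y - y) + y - U.starProjection y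

theorem douglasRachford_eq_self_iff (U V : Submodule ℝ H) [U.HasOrthogonalProjection]
    [V.HasOrthogonalProjection] (y : H) :
    douglasRachford U V y = y ↔ y ∈ (U ⊓ V) ⊔ (U ⊔ V)ᗮ := by
  have hfix : douglasRachford U V y = y ↔
      V.starProjection ((2 : ℝ) • U.starProjection y - y) = U.starProjection y := by
    rw [douglasRachford, add_sub_right_comm, add_eq_right, sub_eq_zero]
  rw [hfix, ← inf_orthogonal]
  constructor
  · intro h
    set u := U.starProjection y
    have huV : u ∈ V := h ▸ coe_mem _
    have hVperp : y - u ∈ Vᗮ := by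
      have := sub_starProjection_mem_orthogonal (K := V) ((2 : ℝ) • u - y)
      rwa [h, two_smul, add_sub_right_comm, add_sub_cancel_right, ← neg_mem_iff, neg_sub] at this
    exact mem_sup.2 ⟨u, mem_inf.2 ⟨coe_mem _, huV⟩, y - u,
      mem_inf.2 ⟨sub_starProjection_mem_orthogonal y, hVperp⟩, add_sub_cancel u y⟩
  · intro h
    obtain ⟨a, ⟨haU, haV⟩, b, ⟨hbU, hbV⟩, rfl⟩ := mem_sup.1 h
    have hPU : U.starProjection (a + b) = a := eq_starProjection_of_mem_orthogonal' haU hbU rfl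
    rw [hPU]
    refine eq_starProjection_of_mem_orthogonal' haV (neg_mem hbV) ?_
    rw [two_smul]
    abel

end DouglasRachford

theorem stmt5_general {H : Type*} [NormedAddCommGroup H] [InnerProductSpace ℝ H]
    [CompleteSpace H]
    (U V : Submodule ℝ H)
    [Submodule.HasOrthogonalProjection U] [Submodule.HasOrthogonalProjection V]
    [Submodule.HasOrthogonalProjection (U ⊓ V)]
    (T : H → H)
    (hT : ∀ y, T y =
      (Submodule.orthogonalProjectionOnto V ((2 : ℝ) • (Submodule.orthogonalProjectionOnto U y : H) - y) : H)
        + y - (Submodule.orthogonalProjectionOnto U y : H))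
    (F : Submodule ℝ H) (hF : ∀ y, y ∈ F ↔ T y = y) [Submodule.HasOrthogonalProjection F]
    (x : H) :
    (Submodule.orthogonalProjectionOnto (U ⊓ V) x : H) = (Submodule.orthogonalProjectionOnto F x : H)
      ↔ x ∈ closure ((U ⊔ V : Submodule ℝ H) : Set H) := by
  have hTdr : T = douglasRachford U V := funext hT
  have hFix : F = (U ⊓ V) ⊔ (U ⊔ V)ᗮ := by
    ext y
    rw [hF, hTdr, douglasRachford_eq_self_iff]
  subst hFix
  have hOrtho : U ⊓ V ⟂ (U ⊔ V)ᗮ :=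
    (Submodule.isOrtho_orthogonal_right _).mono_left (inf_le_left.trans le_sup_left)
  change (U ⊓ V).starProjection x = ((U ⊓ V) ⊔ (U ⊔ V)ᗮ).starProjection x ↔ _
  rw [hOrtho.starProjection_sup, left_eq_add, Submodule.starProjection_apply_eq_zero_iff,
    Submodule.orthogonal_orthogonal_eq_closure]
  rfl

/-- For closed linear subspaces `U, V` and the Douglas–Rachford operator
`T = T_{V,U}`, one has `P_{U ⊓ V} x = P_{Fix T} x` iff `x ∈ closure (U + V)`. -/
theorem stmt5 {H : Type*} [NormedAddCommGroup H] [InnerProductSpace ℝ H]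
    [CompleteSpace H]
    (U V : Submodule ℝ H)
    (hUc : IsClosed (U : Set H)) (hVc : IsClosed (V : Set H))
    [Submodule.HasOrthogonalProjection U] [Submodule.HasOrthogonalProjection V]
    [Submodule.HasOrthogonalProjection (U ⊓ V)]
    (T : H → H)
    (hT : ∀ y, T y =
      (Submodule.orthogonalProjectionOnto V ((2 : ℝ) • (Submodule.orthogonalProjectionOnto U y : H) - y) : H)
        + y - (Submodule.orthogonalProjectionOnto U y : H))
    (F : Submodule ℝ H) (hF : ∀ y, y ∈ F ↔ T y = y) [Submodule.HasOrthogonalProjection F]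
    (x : H) :
    (Submodule.orthogonalProjectionOnto (U ⊓ V) x : H) = (Submodule.orthogonalProjectionOnto F x : H)
      ↔ x ∈ closure ((U ⊔ V : Submodule ℝ H) : Set H) :=
  stmt5_general U V T hT F hF x
end

section
/- Let T₁, …, Tₘ be isometries on a real Hilbert space H with ∩ⱼ Fix Tⱼ ≠ ∅, and let S(x) = {T₁x, …, Tₘx}. Then for every z ∈ ∩ⱼ Fix Tⱼ and every x ∈ H, the point p := P_{aff S(x)}(z) lies in aff S(x), and the set {‖p − Tx‖ : T ∈ S} is a singleton, i.e., p is equidistant from all points of S(x). -/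
/-! Since `Tᵢ` is an isometry fixing `z`, every `Tᵢ x` lies at distance `dist x z` from `z`.
All of them lie in `M`, and by Pythagoras in `M` points of `M` equidistant from `z` are
equidistant from its orthogonal projection onto `M`. -/

open EuclideanGeometry

theorem Isometry.dist_apply_eq_of_apply_eq_self {α : Type*} [PseudoMetricSpace α] {f : α → α} (hf : Isometry f) {z : α} (hz : f z = z) (x : α) :
    dist (f x) z = dist x z := by
  conv_lhs => rw [← hz]
  exact hf.dist_eq x z

theorem stmt8_general {H : Type*} [NormedAddCommGroup H] [InnerProductSpace ℝ H]
    {m : ℕ}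
    (T : Fin m → H → H) (hiso : ∀ i, Isometry (T i))
    (z : H) (hz : ∀ i, T i z = z) (x : H)
    (M : AffineSubspace ℝ H)
    (hM : M = affineSpan ℝ (Set.range fun i => T i x))
    [Nonempty M] [Submodule.HasOrthogonalProjection M.direction] :
    (EuclideanGeometry.orthogonalProjection M z : H) ∈ M ∧
    ∀ i j : Fin m,
      ‖(EuclideanGeometry.orthogonalProjection M z : H) - T i x‖
        = ‖(EuclideanGeometry.orthogonalProjection M z : H) - T j x‖ := by
  have hmem : ∀ i, T i x ∈ M := fun i => hM ▸ subset_affineSpan ℝ _ ⟨i, rfl⟩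
  have hdist : ∀ i, dist (T i x) z = dist x z := fun i =>
    (hiso i).dist_apply_eq_of_apply_eq_self (hz i) x
  refine ⟨(orthogonalProjection M z).2, fun i j => ?_⟩
  rw [← dist_eq_norm', ← dist_eq_norm']
  exact (dist_eq_iff_dist_orthogonalProjection_eq z (hmem i) (hmem j)).1
    ((hdist i).trans (hdist j).symm)

/-- For isometries `T₁, …, Tₘ` with common fixed point `z` and any `x`, the
projection `p` of `z` onto the affine hull `M` of `S(x) = {T₁x, …, Tₘx}`
lies in `M` and is equidistant from all points `Tᵢ x`. -/
theorem stmt8 {H : Type*} [NormedAddCommGroup H] [InnerProductSpace ℝ H]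
    [CompleteSpace H] {m : ℕ}
    (T : Fin m → H → H) (hiso : ∀ i, Isometry (T i))
    (z : H) (hz : ∀ i, T i z = z) (x : H)
    (M : AffineSubspace ℝ H)
    (hM : M = affineSpan ℝ (Set.range fun i => T i x))
    [Nonempty M] [Submodule.HasOrthogonalProjection M.direction] :
    (EuclideanGeometry.orthogonalProjection M z : H) ∈ M ∧
    ∀ i j : Fin m,
      ‖(EuclideanGeometry.orthogonalProjection M z : H) - T i x‖
        = ‖(EuclideanGeometry.orthogonalProjection M z : H) - T j x‖ :=
  stmt8_general T hiso z hz x M hM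
end

section
/- Let S = {T₁, …, Tₘ} be isometries on a real Hilbert space H with ∩ⱼ Fix Tⱼ ≠ ∅, and suppose the circumcenter mapping CC_S is proper. For any z ∈ ∩ⱼ Fix Tⱼ, any x ∈ H, and any map F : H → H with F(y) ∈ aff(S(y)) for all y, one has ‖z − CC_S x‖² + ‖CC_S x − Fx‖² = ‖z − Fx‖². -/
/-! A common fixed point `z` of the isometries `Tᵢ` is equidistant from the points `Tᵢ x`, and so
is `CC x`. Two points equidistant from a family differ by a vector orthogonal to the direction of
its affine span, which contains `CC x - F x`; Pythagoras then gives the identity. -/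

open EuclideanGeometry

section

variable {V P ι : Type*} [NormedAddCommGroup V] [InnerProductSpace ℝ V] [MetricSpace P]
  [NormedAddTorsor V P]

theorem vectorSpan_le_orthogonal_of_equidistant {p : ι → P} {c₁ c₂ : P}
    (h₁ : ∀ i j, dist (p i) c₁ = dist (p j) c₁) (h₂ : ∀ i j, dist (p i) c₂ = dist (p j) c₂) :
    vectorSpan ℝ (Set.range p) ≤ (ℝ ∙ (c₂ -ᵥ c₁))ᗮ := by
  rw [vectorSpan_def, Submodule.span_le]
  rintro _ ⟨_, ⟨i, rfl⟩, _, ⟨j, rfl⟩, rfl⟩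
  rw [SetLike.mem_coe, Submodule.mem_orthogonal_singleton_iff_inner_right]
  exact inner_vsub_vsub_of_dist_eq_of_dist_eq (h₁ j i) (h₂ j i)

theorem dist_sq_add_dist_sq_eq_of_equidistant {p : ι → P} {z c f : P}
    (hz : ∀ i j, dist (p i) z = dist (p j) z) (hc : ∀ i j, dist (p i) c = dist (p j) c)
    (hcp : c ∈ affineSpan ℝ (Set.range p)) (hfp : f ∈ affineSpan ℝ (Set.range p)) :
    dist z c ^ 2 + dist c f ^ 2 = dist z f ^ 2 := by
  have hcf : c -ᵥ f ∈ vectorSpan ℝ (Set.range p) := by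
    rw [← direction_affineSpan]
    exact AffineSubspace.vsub_mem_direction hcp hfp
  have horth : inner ℝ (z -ᵥ c) (c -ᵥ f) = 0 :=
    Submodule.mem_orthogonal_singleton_iff_inner_right.mp
      (vectorSpan_le_orthogonal_of_equidistant hc hz hcf)
  rw [dist_eq_norm_vsub V z f, ← vsub_add_vsub_cancel z c f, sq, sq, sq,
    norm_add_sq_eq_norm_sq_add_norm_sq_real horth, dist_eq_norm_vsub, dist_eq_norm_vsub]

end

theorem stmt9_general {H : Type*} [NormedAddCommGroup H] [InnerProductSpace ℝ H]
    {m : ℕ}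
    (T : Fin m → H → H) (hiso : ∀ i, Isometry (T i))
    (CC : H → H)
    (hCC1 : ∀ y, CC y ∈ affineSpan ℝ (Set.range fun i => T i y))
    (hCC2 : ∀ y (i j : Fin m), ‖CC y - T i y‖ = ‖CC y - T j y‖)
    (z : H) (hz : ∀ i, T i z = z)
    (F : H → H) (hFy : ∀ y, F y ∈ affineSpan ℝ (Set.range fun i => T i y))
    (x : H) :
    ‖z - CC x‖ ^ 2 + ‖CC x - F x‖ ^ 2 = ‖z - F x‖ ^ 2 := by
  have hzx : ∀ i, dist (T i x) z = dist x z := fun i => by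
    simpa only [hz i] using (hiso i).dist_eq x z
  have hz_eq : ∀ i j, dist (T i x) z = dist (T j x) z := fun i j => (hzx i).trans (hzx j).symm
  have hCC_eq : ∀ i j, dist (T i x) (CC x) = dist (T j x) (CC x) := fun i j => by
    simpa only [dist_comm _ (CC x), dist_eq_norm] using hCC2 x i j
  simpa only [dist_eq_norm] using
    dist_sq_add_dist_sq_eq_of_equidistant hz_eq hCC_eq (hCC1 x) (hFy x)

/-- Pythagorean identity for the circumcenter mapping induced by isometries:
`‖z − CC_S x‖² + ‖CC_S x − Fx‖² = ‖z − Fx‖²` whenever `z` is a common fixed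
point and `F(y) ∈ aff S(y)` for all `y`. -/
theorem stmt9 {H : Type*} [NormedAddCommGroup H] [InnerProductSpace ℝ H]
    [CompleteSpace H] {m : ℕ}
    (T : Fin m → H → H) (hiso : ∀ i, Isometry (T i))
    (CC : H → H)
    (hCC1 : ∀ y, CC y ∈ affineSpan ℝ (Set.range fun i => T i y))
    (hCC2 : ∀ y (i j : Fin m), ‖CC y - T i y‖ = ‖CC y - T j y‖)
    (hCC3 : ∀ y p, p ∈ affineSpan ℝ (Set.range fun i => T i y) →
      (∀ i j : Fin m, ‖p - T i y‖ = ‖p - T j y‖) → p = CC y)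
    (z : H) (hz : ∀ i, T i z = z)
    (F : H → H) (hFy : ∀ y, F y ∈ affineSpan ℝ (Set.range fun i => T i y))
    (x : H) :
    ‖z - CC x‖ ^ 2 + ‖CC x - F x‖ ^ 2 = ‖z - F x‖ ^ 2 :=
  stmt9_general T hiso CC hCC1 hCC2 z hz F hFy x
end

section
/- Let S = {T₁, …, Tₘ} be linear isometries on a real Hilbert space H with ∩ⱼ Fix Tⱼ ≠ ∅. Then the circumcenter mapping CC_S is homogeneous: CC_S(λx) = λ CC_S(x) for all x ∈ H and λ ∈ ℝ; and it is a quasitranslation: CC_S(x + z) = CC_S(x) + z for all x ∈ H and z ∈ ∩ⱼ Fix Tⱼ. -/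
/-!
The circumcenter of `T₁ x, …, Tₘ x` is the only equidistant point of their affine hull.
Scaling by `λ` and translating by `z` are affine maps that multiply (resp. preserve)
all distances, so they carry this point to an equidistant point of the affine hull of the
image points. By linearity these image points are `Tᵢ (λ x)`, and, for `z` fixed by
every `Tᵢ`, `Tᵢ (x + z)`; uniqueness then identifies the image with `CC (λ x)`,
resp. `CC (x + z)`.
-/

open Set

theorem AffineMap.apply_mem_affineSpan_range {k V₁ P₁ V₂ P₂ ι : Type*} [Ring k]
    [AddCommGroup V₁] [Module k V₁] [AddTorsor V₁ P₁]
    [AddCommGroup V₂] [Module k V₂] [AddTorsor V₂ P₂]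
    (f : P₁ →ᵃ[k] P₂) {v : ι → P₁} {p : P₁} (hp : p ∈ affineSpan k (range v)) :
    f p ∈ affineSpan k (range (f ∘ v)) := by
  rw [range_comp, ← AffineSubspace.map_span]
  exact AffineSubspace.mem_map_of_mem f hp

section IsCircumcenter

variable {𝕜 E ι : Type*} [NormedField 𝕜] [SeminormedAddCommGroup E] [NormedSpace 𝕜 E]

variable (𝕜) in
def IsCircumcenter (v : ι → E) (p : E) : Prop :=
  p ∈ affineSpan 𝕜 (range v) ∧ ∀ i j, ‖p - v i‖ = ‖p - v j‖

theorem IsCircumcenter.smul {v : ι → E} {p : E} (h : IsCircumcenter 𝕜 v p) (c : 𝕜) :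
    IsCircumcenter 𝕜 (c • v) (c • p) := by
  refine ⟨?_, fun i j => by simp only [Pi.smul_apply, ← smul_sub, norm_smul, h.2 i j]⟩
  exact (c • LinearMap.id : E →ₗ[𝕜] E).toAffineMap.apply_mem_affineSpan_range h.1

theorem IsCircumcenter.add_const {v : ι → E} {p : E} (h : IsCircumcenter 𝕜 v p) (z : E) :
    IsCircumcenter 𝕜 (fun i => v i + z) (p + z) := by
  refine ⟨?_, fun i j => by simp only [add_sub_add_right_eq_sub, h.2 i j]⟩
  convert (AffineEquiv.constVAdd 𝕜 E z).toAffineMap.apply_mem_affineSpan_range h.1 using 1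
  · congr 2 with i
    exact add_comm (v i) z
  · exact add_comm p z

end IsCircumcenter

theorem stmt10_general {H : Type*} [NormedAddCommGroup H] [InnerProductSpace ℝ H]
    {m : ℕ}
    (T : Fin m → H →ₗ[ℝ] H)
    (CC : H → H)
    (hCC1 : ∀ y, CC y ∈ affineSpan ℝ (Set.range fun i => T i y))
    (hCC2 : ∀ y (i j : Fin m), ‖CC y - T i y‖ = ‖CC y - T j y‖)
    (hCC3 : ∀ y p, p ∈ affineSpan ℝ (Set.range fun i => T i y) →
      (∀ i j : Fin m, ‖p - T i y‖ = ‖p - T j y‖) → p = CC y) :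
    (∀ (x : H) (lam : ℝ), CC (lam • x) = lam • CC x) ∧
    (∀ (x z : H), (∀ i, T i z = z) → CC (x + z) = CC x + z) := by
  have hCC : ∀ y, IsCircumcenter ℝ (fun i => T i y) (CC y) := fun y => ⟨hCC1 y, hCC2 y⟩
  refine ⟨fun x lam => ?_, fun x z hz => ?_⟩
  · have h := (hCC x).smul lam
    rw [show lam • (fun i => T i x) = fun i => T i (lam • x) by ext; simp] at h
    exact (hCC3 _ _ h.1 h.2).symm
  · have h := (hCC x).add_const z
    rw [show (fun i => T i x + z) = fun i => T i (x + z) by ext; simp [hz]] at h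
    exact (hCC3 _ _ h.1 h.2).symm

/-- For linear isometries `T₁, …, Tₘ` with a common fixed point, the
circumcenter mapping is homogeneous and a quasitranslation. -/
theorem stmt10 {H : Type*} [NormedAddCommGroup H] [InnerProductSpace ℝ H]
    [CompleteSpace H] {m : ℕ}
    (T : Fin m → H →ₗ[ℝ] H) (hiso : ∀ i, Isometry (T i))
    (z₀ : H) (hz₀ : ∀ i, T i z₀ = z₀)
    (CC : H → H)
    (hCC1 : ∀ y, CC y ∈ affineSpan ℝ (Set.range fun i => T i y))
    (hCC2 : ∀ y (i j : Fin m), ‖CC y - T i y‖ = ‖CC y - T j y‖)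
    (hCC3 : ∀ y p, p ∈ affineSpan ℝ (Set.range fun i => T i y) →
      (∀ i j : Fin m, ‖p - T i y‖ = ‖p - T j y‖) → p = CC y) :
    (∀ (x : H) (lam : ℝ), CC (lam • x) = lam • CC x) ∧
    (∀ (x z : H), (∀ i, T i z = z) → CC (x + z) = CC x + z) :=
  stmt10_general T CC hCC1 hCC2 hCC3
end

section
/- Let S = {T₁, …, Tₘ} be isometries on a real Hilbert space H with ∩ⱼ Fix Tⱼ ≠ ∅, and let x ∈ H. Then the sequence (CC_S^k x)_{k∈ℕ} is Fejér monotone with respect to ∩ⱼ Fix Tⱼ; in particular, for each z ∈ ∩ⱼ Fix Tⱼ the limit lim_k ‖CC_S^k x − z‖ exists and the sequence (CC_S^k x) is bounded. -/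
/-!
If `c` lies in the affine span of points `pᵢ` that are all at distance `ρ` from `c` and all at
distance `r` from `z`, then `‖c - z‖² + ρ² = r²`: writing `c - z = ∑ wᵢ (pᵢ - z)` with
`∑ wᵢ = 1`, the inner products `⟪c - z, pᵢ - z⟫` do not depend on `i`, so `‖c - z‖²` equals
their common value. Applied to `pᵢ = Tᵢ y` and a common fixed point `z` of the isometries `Tᵢ`,
this gives `‖CC y - z‖ ≤ ‖y - z‖`, and Fejér monotonicity of the iterates follows.
-/

open Set Filter Topology

section Fejer

variable {X : Type*} [PseudoMetricSpace X] {f : X → X} {z : X}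

theorem antitone_dist_iterate (hf : ∀ y, dist (f y) z ≤ dist y z) (x : X) :
    Antitone fun k => dist (f^[k] x) z :=
  antitone_nat_of_succ_le fun k => by
    rw [Function.iterate_succ_apply']
    exact hf _

theorem exists_tendsto_dist_iterate (hf : ∀ y, dist (f y) z ≤ dist y z) (x : X) :
    ∃ L, Tendsto (fun k => dist (f^[k] x) z) atTop (𝓝 L) :=
  ⟨_, tendsto_atTop_ciInf (antitone_dist_iterate hf x) ⟨0, by
    rintro _ ⟨k, rfl⟩
    exact dist_nonneg⟩⟩

theorem isBounded_range_iterate (hf : ∀ y, dist (f y) z ≤ dist y z) (x : X) :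
    Bornology.IsBounded (range fun k => f^[k] x) :=
  Metric.isBounded_closedBall.subset <| range_subset_iff.2 fun k =>
    antitone_dist_iterate hf x (Nat.zero_le k)

end Fejer

section Circumcenter

variable {H : Type*} [NormedAddCommGroup H] [InnerProductSpace ℝ H]

theorem norm_sub_sq_add_sq_of_mem_affineSpan {ι : Type*} {p : ι → H} {c z : H} {ρ r : ℝ}
    (hc : c ∈ affineSpan ℝ (range p)) (hρ : ∀ i, ‖c - p i‖ = ρ) (hr : ∀ i, ‖p i - z‖ = r) :
    ‖c - z‖ ^ 2 + ρ ^ 2 = r ^ 2 := by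
  obtain ⟨s, w, hw, hcw⟩ := eq_affineCombination_of_mem_affineSpan hc
  have hcz : c - z = ∑ i ∈ s, w i • (p i - z) := by
    rw [hcw, s.affineCombination_eq_weightedVSubOfPoint_vadd_of_sum_eq_one w p hw z,
      vadd_eq_add, add_sub_cancel_right, Finset.weightedVSubOfPoint_apply]
    rfl
  set K := (‖c - z‖ ^ 2 + r ^ 2 - ρ ^ 2) / 2 with hK_def
  have hinner : ∀ i, inner ℝ (c - z) (p i - z) = K := by
    intro i
    have h := norm_sub_sq_real (c - z) (p i - z)
    rw [sub_sub_sub_cancel_right, hρ i, hr i] at h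
    linarith
  have hK : ‖c - z‖ ^ 2 = K :=
    calc ‖c - z‖ ^ 2 = inner ℝ (c - z) (c - z) := (real_inner_self_eq_norm_sq _).symm
      _ = ∑ i ∈ s, w i * inner ℝ (c - z) (p i - z) := by
        nth_rw 2 [hcz]
        simp only [inner_sum, real_inner_smul_right]
      _ = K := by simp only [hinner, ← Finset.sum_mul, hw, one_mul]
  linarith [hK_def]

theorem norm_sub_le_of_mem_affineSpan_of_isometry {ι : Type*} {T : ι → H → H}
    (hiso : ∀ i, Isometry (T i)) {z : H} (hz : ∀ i, T i z = z) {y c : H}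
    (hc : c ∈ affineSpan ℝ (range fun i => T i y))
    (hequi : ∀ i j, ‖c - T i y‖ = ‖c - T j y‖) :
    ‖c - z‖ ≤ ‖y - z‖ := by
  obtain ⟨_, i₀, rfl⟩ := (affineSpan_nonempty ℝ).1 ⟨c, hc⟩
  have hr : ∀ i, ‖T i y - z‖ = ‖y - z‖ := fun i => by
    simpa [dist_eq_norm, hz i] using (hiso i).dist_eq y z
  have h := norm_sub_sq_add_sq_of_mem_affineSpan hc (fun i => hequi i i₀) hr
  refine (pow_le_pow_iff_left₀ (norm_nonneg _) (norm_nonneg _) two_ne_zero).1 ?_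
  exact h ▸ le_add_of_nonneg_right (sq_nonneg _)

end Circumcenter

theorem stmt11_general {H : Type*} [NormedAddCommGroup H] [InnerProductSpace ℝ H]
    {m : ℕ}
    (T : Fin m → H → H) (hiso : ∀ i, Isometry (T i))
    (z₀ : H) (hz₀ : ∀ i, T i z₀ = z₀)
    (CC : H → H)
    (hCC1 : ∀ y, CC y ∈ affineSpan ℝ (Set.range fun i => T i y))
    (hCC2 : ∀ y (i j : Fin m), ‖CC y - T i y‖ = ‖CC y - T j y‖)
    (x : H) :
    (∀ z, (∀ i, T i z = z) → ∀ k : ℕ, ‖CC^[k + 1] x - z‖ ≤ ‖CC^[k] x - z‖) ∧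
    (∀ z, (∀ i, T i z = z) → ∃ L : ℝ,
      Filter.Tendsto (fun k : ℕ => ‖CC^[k] x - z‖) Filter.atTop (nhds L)) ∧
    Bornology.IsBounded (Set.range fun k : ℕ => CC^[k] x) := by
  have hCC : ∀ z, (∀ i, T i z = z) → ∀ y, dist (CC y) z ≤ dist y z := fun z hz y => by
    simpa only [dist_eq_norm] using
      norm_sub_le_of_mem_affineSpan_of_isometry hiso hz (hCC1 y) (hCC2 y)
  refine ⟨fun z hz k => ?_, fun z hz => ?_, isBounded_range_iterate (hCC z₀ hz₀) x⟩
  · simpa only [dist_eq_norm] using antitone_dist_iterate (hCC z hz) x k.le_succ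
  · simpa only [dist_eq_norm] using exists_tendsto_dist_iterate (hCC z hz) x

/-- The circumcentered isometry method is Fejér monotone with respect to the
common fixed point set; in particular `lim_k ‖CC^k x − z‖` exists for every
common fixed point `z`, and the sequence of iterates is bounded. -/
theorem stmt11 {H : Type*} [NormedAddCommGroup H] [InnerProductSpace ℝ H]
    [CompleteSpace H] {m : ℕ}
    (T : Fin m → H → H) (hiso : ∀ i, Isometry (T i))
    (z₀ : H) (hz₀ : ∀ i, T i z₀ = z₀)
    (CC : H → H)
    (hCC1 : ∀ y, CC y ∈ affineSpan ℝ (Set.range fun i => T i y))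
    (hCC2 : ∀ y (i j : Fin m), ‖CC y - T i y‖ = ‖CC y - T j y‖)
    (hCC3 : ∀ y p, p ∈ affineSpan ℝ (Set.range fun i => T i y) →
      (∀ i j : Fin m, ‖p - T i y‖ = ‖p - T j y‖) → p = CC y)
    (x : H) :
    (∀ z, (∀ i, T i z = z) → ∀ k : ℕ, ‖CC^[k + 1] x - z‖ ≤ ‖CC^[k] x - z‖) ∧
    (∀ z, (∀ i, T i z = z) → ∃ L : ℝ,
      Filter.Tendsto (fun k : ℕ => ‖CC^[k] x - z‖) Filter.atTop (nhds L)) ∧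
    Bornology.IsBounded (Set.range fun k : ℕ => CC^[k] x) :=
  stmt11_general T hiso z₀ hz₀ CC hCC1 hCC2 x
end

section
/- Let S = {T₁, …, Tₘ} be isometries on a real Hilbert space H with ∩ⱼ Fix Tⱼ ≠ ∅, and assume Id belongs to the affine hull of S (as operators). Then the circumcenter mapping CC_S is asymptotically regular: for every y ∈ H, CC_S^k y − CC_S^{k+1} y → 0. -/
/-!
A common fixed point `z` of the `Tᵢ` and the circumcenter `CC x` are both equidistant from the
points `Tᵢ x`, so `z - CC x` is orthogonal to their affine hull; as `Id ∈ aff S`, the point `x`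
lies in that hull too, whence `‖z - CC x‖² + ‖CC x - x‖² = ‖z - x‖²`. Along the orbit of `CC` the
squared steps therefore telescope against `‖z - CC^k y‖²`, so they are summable and tend to `0`.
-/

open Filter Set

section Equidistant

variable {V P : Type*} [NormedAddCommGroup V] [InnerProductSpace ℝ V] [MetricSpace P]
  [NormedAddTorsor V P] {ι : Type*} {p : ι → P} {c₁ c₂ : P}

theorem vsub_mem_orthogonal_vectorSpan_of_equidistant
    (h₁ : ∀ i j, dist (p i) c₁ = dist (p j) c₁) (h₂ : ∀ i j, dist (p i) c₂ = dist (p j) c₂) :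
    c₂ -ᵥ c₁ ∈ (vectorSpan ℝ (range p))ᗮ := by
  have hle : vectorSpan ℝ (range p) ≤ (ℝ ∙ (c₂ -ᵥ c₁))ᗮ := by
    rw [vectorSpan_def, Submodule.span_le]
    rintro _ ⟨_, ⟨j, rfl⟩, _, ⟨i, rfl⟩, rfl⟩
    exact Submodule.mem_orthogonal_singleton_iff_inner_right.2
      (EuclideanGeometry.inner_vsub_vsub_of_dist_eq_of_dist_eq (h₁ i j) (h₂ i j))
  exact (Submodule.mem_orthogonal' _ _).2 fun u hu =>
    Submodule.mem_orthogonal_singleton_iff_inner_right.1 (hle hu)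

theorem dist_sq_add_dist_sq_of_equidistant {c z x : P}
    (hc : ∀ i j, dist (p i) c = dist (p j) c) (hz : ∀ i j, dist (p i) z = dist (p j) z)
    (hcs : c ∈ affineSpan ℝ (range p)) (hxs : x ∈ affineSpan ℝ (range p)) :
    dist z c ^ 2 + dist c x ^ 2 = dist z x ^ 2 := by
  have hperp : inner ℝ (z -ᵥ c) (c -ᵥ x) = 0 := by
    refine Submodule.inner_left_of_mem_orthogonal ?_
      (vsub_mem_orthogonal_vectorSpan_of_equidistant hc hz)
    rw [← direction_affineSpan]
    exact AffineSubspace.vsub_mem_direction hcs hxs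
  rw [dist_eq_norm_vsub V, dist_eq_norm_vsub V, dist_eq_norm_vsub V,
    ← vsub_add_vsub_cancel z c x, sq, sq, sq, norm_add_sq_eq_norm_sq_add_norm_sq_real hperp]

end Equidistant

theorem tendsto_dist_iterate_iterate_succ_of_dist_sq_add_dist_sq_le
    {X : Type*} [PseudoMetricSpace X] {f : X → X} {z : X}
    (hf : ∀ x, dist z (f x) ^ 2 + dist (f x) x ^ 2 ≤ dist z x ^ 2) (y : X) :
    Tendsto (fun k => dist (f^[k] y) (f^[k + 1] y)) atTop (nhds 0) := by
  have hstep : ∀ k, dist (f^[k] y) (f^[k + 1] y) ^ 2 ≤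
      dist z (f^[k] y) ^ 2 - dist z (f^[k + 1] y) ^ 2 := fun k => by
    have := hf (f^[k] y)
    rw [← Function.iterate_succ_apply' f k y, dist_comm (f^[k + 1] y)] at this
    linarith
  have hsum : Summable fun k => dist (f^[k] y) (f^[k + 1] y) ^ 2 := by
    refine summable_of_sum_range_le (c := dist z y ^ 2) (fun _ => by positivity) fun n => ?_
    calc ∑ k ∈ Finset.range n, dist (f^[k] y) (f^[k + 1] y) ^ 2
        ≤ ∑ k ∈ Finset.range n, (dist z (f^[k] y) ^ 2 - dist z (f^[k + 1] y) ^ 2) :=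
          Finset.sum_le_sum fun k _ => hstep k
      _ = dist z y ^ 2 - dist z (f^[n] y) ^ 2 := by
          rw [Finset.sum_range_sub' (fun k => dist z (f^[k] y) ^ 2)]; rfl
      _ ≤ dist z y ^ 2 := by linarith [sq_nonneg (dist z (f^[n] y))]
  simpa using hsum.tendsto_atTop_zero.sqrt

theorem stmt12_general {H : Type*} [NormedAddCommGroup H] [InnerProductSpace ℝ H]
    {m : ℕ}
    (T : Fin m → H → H) (hiso : ∀ i, Isometry (T i))
    (z₀ : H) (hz₀ : ∀ i, T i z₀ = z₀)
    (CC : H → H)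
    (hCC1 : ∀ y, CC y ∈ affineSpan ℝ (Set.range fun i => T i y))
    (hCC2 : ∀ y (i j : Fin m), ‖CC y - T i y‖ = ‖CC y - T j y‖)
    (hId : ∃ α : Fin m → ℝ, (∑ i, α i) = 1 ∧ ∀ y, y = ∑ i, α i • T i y) :
    ∀ y : H, Filter.Tendsto (fun k : ℕ => CC^[k] y - CC^[k + 1] y)
      Filter.atTop (nhds 0) := by
  obtain ⟨α, hα, hαT⟩ := hId
  have hmem : ∀ x, x ∈ affineSpan ℝ (range fun i => T i x) := fun x => by
    have := affineCombination_mem_affineSpan hα fun i => T i x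
    rwa [Finset.affineCombination_eq_linear_combination _ _ _ hα, ← hαT x] at this
  have hz₀_equi : ∀ x i j, dist (T i x) z₀ = dist (T j x) z₀ := fun x i j => by
    conv_lhs => rw [← hz₀ i]
    conv_rhs => rw [← hz₀ j]
    rw [(hiso i).dist_eq, (hiso j).dist_eq]
  have hCC_equi : ∀ x i j, dist (T i x) (CC x) = dist (T j x) (CC x) := fun x i j => by
    simpa only [dist_comm (T _ x), dist_eq_norm] using hCC2 x i j
  have hpyth : ∀ x, dist z₀ (CC x) ^ 2 + dist (CC x) x ^ 2 ≤ dist z₀ x ^ 2 := fun x =>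
    (dist_sq_add_dist_sq_of_equidistant (hCC_equi x) (hz₀_equi x) (hCC1 x) (hmem x)).le
  intro y
  simpa only [dist_eq_norm, ← tendsto_zero_iff_norm_tendsto_zero] using
    tendsto_dist_iterate_iterate_succ_of_dist_sq_add_dist_sq_le hpyth y

/-- If `Id` belongs to the affine hull of the isometries `S = {T₁, …, Tₘ}`
(with a common fixed point), then the circumcenter mapping `CC_S` is
asymptotically regular. -/
theorem stmt12 {H : Type*} [NormedAddCommGroup H] [InnerProductSpace ℝ H]
    [CompleteSpace H] {m : ℕ}
    (T : Fin m → H → H) (hiso : ∀ i, Isometry (T i))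
    (z₀ : H) (hz₀ : ∀ i, T i z₀ = z₀)
    (CC : H → H)
    (hCC1 : ∀ y, CC y ∈ affineSpan ℝ (Set.range fun i => T i y))
    (hCC2 : ∀ y (i j : Fin m), ‖CC y - T i y‖ = ‖CC y - T j y‖)
    (hCC3 : ∀ y p, p ∈ affineSpan ℝ (Set.range fun i => T i y) →
      (∀ i j : Fin m, ‖p - T i y‖ = ‖p - T j y‖) → p = CC y)
    (hId : ∃ α : Fin m → ℝ, (∑ i, α i) = 1 ∧ ∀ y, y = ∑ i, α i • T i y) :
    ∀ y : H, Filter.Tendsto (fun k : ℕ => CC^[k] y - CC^[k + 1] y)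
      Filter.atTop (nhds 0) :=
  stmt12_general T hiso z₀ hz₀ CC hCC1 hCC2 hId
end

section
/- Let S = {T₁, …, Tₘ} be isometries on a real Hilbert space H, let W be a nonempty closed affine subspace of ∩ⱼ Fix Tⱼ, and let x ∈ H. Then the following are equivalent: (i) CC_S x ∈ W; (ii) CC_S x = P_W x; (iii) CC_S^k x = P_W x for all k ≥ 1. -/
/-!
Every `Tᵢ` is an isometry fixing `W` pointwise, so `x` and `Tᵢ x` are equidistant from every
point of `W`, i.e. `Tᵢ x - x ⟂ W.direction`. Since `CC x` lies in the affine span of the `Tᵢ x`,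
also `CC x - x ⟂ W.direction`, and the characterisation of `P_W x` as the unique point `q ∈ W`
with `x - q ⟂ W.direction` gives (i) ⇔ (ii). For (ii) ⇒ (iii), `CC` fixes `W` pointwise, since
for `w ∈ W` the affine span of the `Tᵢ w` is contained in `{w}`.
-/

open EuclideanGeometry

section AffineSpan

variable {k V P ι : Type*} [Ring k] [AddCommGroup V] [Module k V] [AddTorsor V P]

theorem vsub_mem_of_mem_affineSpan {K : Submodule k V} {s : Set P} {x p : P}
    (hs : ∀ q ∈ s, q -ᵥ x ∈ K) (hp : p ∈ affineSpan k s) : p -ᵥ x ∈ K := by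
  have hle : affineSpan k s ≤ AffineSubspace.mk' x K :=
    affineSpan_le.2 fun q hq => AffineSubspace.mem_mk'.2 (hs q hq)
  exact AffineSubspace.mem_mk'.1 (hle hp)

theorem eq_of_mem_affineSpan_range_of_forall_eq {f : ι → P} {p w : P}
    (hp : p ∈ affineSpan k (Set.range f)) (hf : ∀ i, f i = w) : p = w := by
  have hsub : Set.range f ⊆ {w} := Set.range_subset_iff.2 hf
  exact (AffineSubspace.mem_affineSpan_singleton k V).1 (affineSpan_mono k hsub hp)

end AffineSpan

section Orthogonal

variable {V P : Type*} [NormedAddCommGroup V] [InnerProductSpace ℝ V] [MetricSpace P]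
  [NormedAddTorsor V P]

theorem vsub_mem_direction_orthogonal_of_forall_dist_eq {W : AffineSubspace ℝ P} {x y : P}
    (h : ∀ w ∈ W, dist x w = dist y w) : y -ᵥ x ∈ W.directionᗮ := by
  rw [AffineSubspace.direction_eq_vectorSpan, vectorSpan_def, Submodule.mem_orthogonal]
  intro u hu
  induction hu using Submodule.span_induction with
  | mem u hu =>
    obtain ⟨w₁, hw₁, w₂, hw₂, rfl⟩ := hu
    exact inner_vsub_vsub_of_dist_eq_of_dist_eq (h w₂ hw₂) (h w₁ hw₁)
  | zero => exact inner_zero_left _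
  | add u v _ _ hu hv => rw [inner_add_left, hu, hv, add_zero]
  | smul c u _ hu => rw [real_inner_smul_left, hu, mul_zero]

theorem Isometry.vsub_mem_direction_orthogonal {f : P → P} (hf : Isometry f)
    {W : AffineSubspace ℝ P} (hW : ∀ w ∈ W, f w = w) (x : P) : f x -ᵥ x ∈ W.directionᗮ :=
  vsub_mem_direction_orthogonal_of_forall_dist_eq fun w hw => by
    rw [← hf.dist_eq x w, hW w hw]

end Orthogonal

theorem Function.iterate_eq_of_apply_eq_of_isFixedPt {α : Type*} {f : α → α} {x p : α}
    (hx : f x = p) (hp : f p = p) {k : ℕ} (hk : 1 ≤ k) : f^[k] x = p := by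
  obtain ⟨n, rfl⟩ := Nat.exists_eq_add_of_le' hk
  rw [Function.iterate_succ_apply, hx, Function.iterate_fixed hp]

theorem stmt14_general {H : Type*} [NormedAddCommGroup H] [InnerProductSpace ℝ H]
    {m : ℕ}
    (T : Fin m → H → H) (hiso : ∀ i, Isometry (T i))
    (CC : H → H)
    (hCC1 : ∀ y, CC y ∈ affineSpan ℝ (Set.range fun i => T i y))
    (W : AffineSubspace ℝ H) [Nonempty W] [Submodule.HasOrthogonalProjection W.direction]
    (hW : ∀ w ∈ W, ∀ i, T i w = w)
    (x : H) :
    (CC x ∈ W ↔ CC x = (EuclideanGeometry.orthogonalProjection W x : H)) ∧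
    (CC x = (EuclideanGeometry.orthogonalProjection W x : H) ↔
      ∀ k : ℕ, 1 ≤ k → CC^[k] x = (EuclideanGeometry.orthogonalProjection W x : H)) := by
  have hperp : x -ᵥ CC x ∈ W.directionᗮ := by
    rw [← neg_vsub_eq_vsub_rev, neg_mem_iff]
    exact vsub_mem_of_mem_affineSpan
      (by rintro _ ⟨i, rfl⟩; exact (hiso i).vsub_mem_direction_orthogonal (hW · · i) x) (hCC1 x)
  have hfix : ∀ w ∈ W, CC w = w := fun w hw =>
    eq_of_mem_affineSpan_range_of_forall_eq (hCC1 w) (hW w hw)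
  refine ⟨⟨fun h => (coe_orthogonalProjection_eq_iff_mem.2 ⟨h, hperp⟩).symm,
    fun h => h ▸ orthogonalProjection_mem x⟩, ⟨fun h k hk => ?_, fun h => h 1 le_rfl⟩⟩
  exact Function.iterate_eq_of_apply_eq_of_isFixedPt h (hfix _ (orthogonalProjection_mem x)) hk

/-- For the circumcenter mapping `CC_S` of isometries `S` and a nonempty
closed affine subspace `W` of the common fixed point set, the following are
equivalent: `CC_S x ∈ W`; `CC_S x = P_W x`; `CC_S^k x = P_W x` for all
`k ≥ 1`. -/
theorem stmt14 {H : Type*} [NormedAddCommGroup H] [InnerProductSpace ℝ H]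
    [CompleteSpace H] {m : ℕ}
    (T : Fin m → H → H) (hiso : ∀ i, Isometry (T i))
    (CC : H → H)
    (hCC1 : ∀ y, CC y ∈ affineSpan ℝ (Set.range fun i => T i y))
    (hCC2 : ∀ y (i j : Fin m), ‖CC y - T i y‖ = ‖CC y - T j y‖)
    (hCC3 : ∀ y p, p ∈ affineSpan ℝ (Set.range fun i => T i y) →
      (∀ i j : Fin m, ‖p - T i y‖ = ‖p - T j y‖) → p = CC y)
    (W : AffineSubspace ℝ H) [Nonempty W] [Submodule.HasOrthogonalProjection W.direction]
    (hW : ∀ w ∈ W, ∀ i, T i w = w)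
    (x : H) :
    (CC x ∈ W ↔ CC x = (EuclideanGeometry.orthogonalProjection W x : H)) ∧
    (CC x = (EuclideanGeometry.orthogonalProjection W x : H) ↔
      ∀ k : ℕ, 1 ≤ k → CC^[k] x = (EuclideanGeometry.orthogonalProjection W x : H)) :=
  stmt14_general T hiso CC hCC1 W hW x
end

section
/- Let U₁, …, U_t be closed affine subspaces of a real Hilbert space H with nonempty intersection, Lᵢ = Uᵢ − Uᵢ, and let x ∈ H. Then for every finite composition R = R_{U_{i_r}}⋯R_{U_{i_1}} of reflectors, Rx − x lies in (∩ᵢ Lᵢ)^⊥; that is, ⟨Rx − x, z⟩ = 0 for all z ∈ ∩ᵢ Lᵢ. -/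
open scoped RealInnerProductSpace

/-
A reflector moves every point along the orthogonal complement of its direction:
`R_U y - y = 2 (P_U y - y) ∈ (par U)ᗮ`. Hence `y ↦ ⟪y, w⟫` is invariant under each reflector
when `w` lies in every direction, and so under any finite composition of them.
-/

theorem List.apply_foldl_eq_of_forall_apply_eq {α β γ : Type*} (g : α → γ) (f : α → β → α)
    (hf : ∀ a b, g (f a b) = g a) (l : List β) (a : α) : g (l.foldl f a) = g a := by
  induction l generalizing a with
  | nil => rfl
  | cons b l ih => rw [List.foldl_cons, ih, hf]

namespace EuclideanGeometry

variable {𝕜 V P : Type*} [RCLike 𝕜] [NormedAddCommGroup V] [InnerProductSpace 𝕜 V]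
  [MetricSpace P] [NormedAddTorsor V P]

theorem reflection_vsub_self_mem_direction_orthogonal (s : AffineSubspace 𝕜 P) [Nonempty s]
    [s.direction.HasOrthogonalProjection] (p : P) :
    reflection s p -ᵥ p ∈ s.directionᗮ := by
  have hp := orthogonalProjection_vsub_mem_direction_orthogonal s p
  rw [reflection_apply', vadd_vsub_assoc]
  exact s.directionᗮ.add_mem hp hp

end EuclideanGeometry

section

variable {H : Type*} [NormedAddCommGroup H] [InnerProductSpace ℝ H]

open EuclideanGeometry in
theorem inner_reflection_eq_of_mem_direction (s : AffineSubspace ℝ H) [Nonempty s]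
    [s.direction.HasOrthogonalProjection] (y : H) {w : H} (hw : w ∈ s.direction) :
    ⟪reflection s y, w⟫ = ⟪y, w⟫ := by
  have h := Submodule.inner_left_of_mem_orthogonal hw
    (reflection_vsub_self_mem_direction_orthogonal s y)
  rwa [vsub_eq_sub, inner_sub_left, sub_eq_zero] at h

theorem two_smul_orthogonalProjection_sub_eq_reflection (s : AffineSubspace ℝ H) [Nonempty s]
    [s.direction.HasOrthogonalProjection] (y : H) :
    (2 : ℝ) • (EuclideanGeometry.orthogonalProjection s y : H) - y =
      EuclideanGeometry.reflection s y := by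
  rw [EuclideanGeometry.reflection_apply', vsub_eq_sub, vadd_eq_add]
  module

end

theorem stmt18_general {H : Type*} [NormedAddCommGroup H] [InnerProductSpace ℝ H]
    {t : ℕ}
    (U : Fin t → AffineSubspace ℝ H)
    [∀ i, Nonempty (U i)] [∀ i, Submodule.HasOrthogonalProjection (U i).direction]
    (RU : Fin t → H → H)
    (hRU : ∀ i y, RU i y =
      (2 : ℝ) • (EuclideanGeometry.orthogonalProjection (U i) y : H) - y)
    (x : H) (l : List (Fin t)) :
    ∀ w : H, (∀ i, w ∈ (U i).direction) →
      ⟪l.foldl (fun y i => RU i y) x - x, w⟫ = 0 := by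
  intro w hw
  have hinv : ∀ y i, ⟪RU i y, w⟫ = ⟪y, w⟫ := fun y i => by
    rw [hRU, two_smul_orthogonalProjection_sub_eq_reflection,
      inner_reflection_eq_of_mem_direction _ _ (hw i)]
  rw [inner_sub_left, List.apply_foldl_eq_of_forall_apply_eq (⟪·, w⟫) _ hinv, sub_self]

/-- For any finite composition `R` of reflectors through closed affine
subspaces `Uᵢ` with nonempty intersection, `Rx − x` is orthogonal to
`∩ᵢ Lᵢ`, where `Lᵢ` is the linear subspace parallel to `Uᵢ`. -/
theorem stmt18 {H : Type*} [NormedAddCommGroup H] [InnerProductSpace ℝ H]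
    [CompleteSpace H] {t : ℕ}
    (U : Fin t → AffineSubspace ℝ H)
    [∀ i, Nonempty (U i)] [∀ i, Submodule.HasOrthogonalProjection (U i).direction]
    (z₀ : H) (hz₀ : ∀ i, z₀ ∈ U i)
    (RU : Fin t → H → H)
    (hRU : ∀ i y, RU i y =
      (2 : ℝ) • (EuclideanGeometry.orthogonalProjection (U i) y : H) - y)
    (x : H) (l : List (Fin t)) :
    ∀ w : H, (∀ i, w ∈ (U i).direction) →
      ⟪l.foldl (fun y i => RU i y) x - x, w⟫ = 0 :=
  stmt18_general U RU hRU x l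
end

section
/- Let C₁, …, C_N be closed affine subspaces of a real Hilbert space H with ∩ᵢ Cᵢ ≠ ∅, and define Q := (1/N)(P_{C₁} + ⋯ + P_{C_N}). Then for every x ∈ H, the iterates Q^k x converge strongly to P_{∩ᵢ Cᵢ} x. -/
/-!
After translating by a common point of the `Cᵢ`, `Q` acts as the average `T` of the orthogonal
projections onto the directions of the `Cᵢ`. Both `T` and `1 - T` are positive operators, hence so
is `T ^ k * (1 - T)` for every `k`, so `aₖ = re ⟪T ^ k y, y⟫` decreases to a limit. As
`‖T ^ m y - T ^ n y‖² = a₂ₘ - 2 aₘ₊ₙ + a₂ₙ`, the iterates `T ^ k y` form a Cauchy sequence. Their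
limit is fixed by `T` and has the same inner product as `y` with every fixed point of `T`, so it is
the projection of `y` onto the fixed space of `T`, which is the intersection of the directions.
-/

open Filter Topology RCLike

namespace ContinuousLinearMap

variable {𝕜 E : Type*} [RCLike 𝕜] [NormedAddCommGroup E] [InnerProductSpace 𝕜 E] [CompleteSpace E]
  {T : E →L[𝕜] E}

theorem IsPositive.pow_mul_of_commute {X : E →L[𝕜] E} (hT : T.IsPositive) (hX : X.IsPositive)
    (hTX : (T * X).IsPositive) (hc : Commute T X) (k : ℕ) : (T ^ k * X).IsPositive := by
  induction k using Nat.twoStepInduction with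
  | zero => simpa using hX
  | one => simpa using hTX
  | more k hk _ =>
    have h := hk.conj_adjoint T
    rwa [hT.isSelfAdjoint.adjoint_eq, ← mul_def, ← mul_def, mul_assoc, ← hc.eq, ← mul_assoc,
      ← mul_assoc, ← pow_succ', ← pow_succ] at h

theorem IsPositive.pow (hT : T.IsPositive) (k : ℕ) : (T ^ k).IsPositive := by
  simpa using hT.pow_mul_of_commute isPositive_one (by simpa using hT) (Commute.one_right T) k

theorem IsPositive.mul_one_sub (hT : T.IsPositive) (hT1 : (1 - T).IsPositive) :
    (T * (1 - T)).IsPositive := by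
  have h := (hT1.conj_adjoint T).add (hT.conj_adjoint (1 - T))
  rw [hT.isSelfAdjoint.adjoint_eq, hT1.isSelfAdjoint.adjoint_eq] at h
  convert h using 1
  simp only [← mul_def]
  noncomm_ring

theorem _root_.IsSelfAdjoint.inner_pow_apply_pow_apply (hT : IsSelfAdjoint T) (m n : ℕ)
    (x y : E) : inner 𝕜 ((T ^ m) x) ((T ^ n) y) = inner 𝕜 ((T ^ (m + n)) x) y := by
  rw [← (hT.pow n).adjoint_eq, adjoint_inner_right, ← mul_apply_eq_comp, ← pow_add, add_comm]

theorem IsPositive.antitone_re_inner_pow_apply (hT : T.IsPositive) (hT1 : (1 - T).IsPositive)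
    (y : E) : Antitone fun k => re (inner 𝕜 ((T ^ k) y) y) := by
  refine antitone_nat_of_succ_le fun k => ?_
  have h := (hT.pow_mul_of_commute hT1 (hT.mul_one_sub hT1)
    ((Commute.one_right T).sub_right (Commute.refl T)) k).re_inner_nonneg_left y
  simpa [mul_sub, pow_succ, inner_sub_left] using h

theorem IsPositive.cauchySeq_pow_apply (hT : T.IsPositive) (hT1 : (1 - T).IsPositive) (y : E) :
    CauchySeq fun k => (T ^ k) y := by
  set a : ℕ → ℝ := fun k => re (inner 𝕜 ((T ^ k) y) y)
  have ha : Tendsto a atTop (𝓝 (⨅ k, a k)) :=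
    tendsto_atTop_ciInf (hT.antitone_re_inner_pow_apply hT1 y)
      ⟨0, by rintro _ ⟨k, rfl⟩; exact (hT.pow k).re_inner_nonneg_left y⟩
  have hsq : ∀ m n, dist ((T ^ m) y) ((T ^ n) y) ^ 2 = a (m + m) - 2 * a (m + n) + a (n + n) := by
    intro m n
    simp only [a, dist_eq_norm, @norm_sub_sq 𝕜, @norm_sq_eq_re_inner 𝕜,
      hT.isSelfAdjoint.inner_pow_apply_pow_apply]
  have hfst : Tendsto (Prod.fst : ℕ × ℕ → ℕ) atTop atTop := by
    rw [← prod_atTop_atTop_eq]; exact tendsto_fst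
  have hsnd : Tendsto (Prod.snd : ℕ × ℕ → ℕ) atTop atTop := by
    rw [← prod_atTop_atTop_eq]; exact tendsto_snd
  have h := ((ha.comp (hfst.atTop_add_atTop hfst)).sub
    ((ha.comp (hfst.atTop_add_atTop hsnd)).const_mul 2)).add (ha.comp (hsnd.atTop_add_atTop hsnd))
  rw [cauchySeq_iff_tendsto_dist_atTop_0]
  convert h.sqrt using 2 with p
  · simp only [Function.comp_apply, ← hsq, Real.sqrt_sq dist_nonneg]
  · ring_nf; simp

theorem IsPositive.tendsto_pow_apply_starProjection (hT : T.IsPositive)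
    (hT1 : (1 - T).IsPositive) (K : Submodule 𝕜 E) [K.HasOrthogonalProjection]
    (hK : ∀ u, u ∈ K ↔ T u = u) (y : E) :
    Tendsto (fun k => (T ^ k) y) atTop (𝓝 (K.starProjection y)) := by
  obtain ⟨z, hz⟩ := cauchySeq_tendsto_of_complete (hT.cauchySeq_pow_apply hT1 y)
  have hTz : T z = z := by
    refine tendsto_nhds_unique ((T.continuous.tendsto z).comp hz) ?_
    simpa only [Function.comp_def, ← mul_apply_eq_comp, ← pow_succ'] using
      (tendsto_add_atTop_iff_nat 1).mpr hz
  suffices K.starProjection y = z by rwa [this]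
  refine Submodule.eq_starProjection_of_mem_of_inner_eq_zero ((hK z).mpr hTz) fun v hv => ?_
  have hconst : ∀ k, inner 𝕜 ((T ^ k) y) v = inner 𝕜 y v := fun k => by
    rw [← (hT.isSelfAdjoint.pow k).adjoint_eq, adjoint_inner_left, FunLike.coe_pow_eq_iterate,
      Function.iterate_fixed ((hK v).mp hv)]
  have hlim : Tendsto (fun k => inner 𝕜 ((T ^ k) y) v) atTop (𝓝 (inner 𝕜 z v)) :=
    hz.inner tendsto_const_nhds
  simp only [hconst, tendsto_const_nhds_iff] at hlim
  rw [inner_sub_left, hlim, sub_self]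

theorem iterate_apply_eq_pow_apply_sub_add {R M : Type*} [Semiring R] [TopologicalSpace M]
    [AddCommGroup M] [Module R M] (T : M →L[R] M) {Q : M → M} {z : M}
    (hQ : ∀ x, Q x = T (x - z) + z) (k : ℕ) (x : M) : Q^[k] x = (T ^ k) (x - z) + z := by
  induction k with
  | zero => simp
  | succ k ih =>
    rw [Function.iterate_succ_apply', ih, hQ, add_sub_cancel_right, pow_succ', mul_apply_eq_comp]

end ContinuousLinearMap

section AverageStarProjection

open scoped ComplexOrder

variable {𝕜 E ι : Type*} [RCLike 𝕜] [NormedAddCommGroup E] [InnerProductSpace 𝕜 E] [Fintype ι]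
  (K : ι → Submodule 𝕜 E) [∀ i, (K i).HasOrthogonalProjection]

noncomputable def averageStarProjection : E →L[𝕜] E :=
  (Fintype.card ι : 𝕜)⁻¹ • ∑ i, (K i).starProjection

theorem averageStarProjection_apply (u : E) :
    averageStarProjection K u = (Fintype.card ι : 𝕜)⁻¹ • ∑ i, (K i).starProjection u := by
  simp [averageStarProjection]

theorem isPositive_averageStarProjection [CompleteSpace E] :
    (averageStarProjection K).IsPositive := by
  refine (ContinuousLinearMap.isPositive_sum _ fun i _ =>
    .of_isStarProjection isStarProjection_starProjection).smul_of_nonneg ?_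
  simp only [inv_nonneg, Nat.cast_nonneg]

theorem one_sub_averageStarProjection [Nonempty ι] :
    1 - averageStarProjection K = averageStarProjection fun i => (K i)ᗮ := by
  have hcard : (Fintype.card ι : 𝕜) ≠ 0 := Nat.cast_ne_zero.mpr Fintype.card_ne_zero
  simp only [averageStarProjection, Submodule.starProjection_orthogonal', Finset.sum_sub_distrib,
    Finset.sum_const, Finset.card_univ, smul_sub, ← Nat.cast_smul_eq_nsmul 𝕜, smul_smul,
    inv_mul_cancel₀ hcard, one_smul]

theorem averageStarProjection_apply_eq_self_iff [Nonempty ι] {u : E} :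
    averageStarProjection K u = u ↔ ∀ i, u ∈ K i := by
  have hcard : (Fintype.card ι : 𝕜) ≠ 0 := Nat.cast_ne_zero.mpr Fintype.card_ne_zero
  constructor
  · intro h
    have hle : ∀ i ∈ Finset.univ, ‖(K i).starProjection u‖ ≤ ‖u‖ := fun i _ =>
      (K i).norm_starProjection_apply_le u
    -- `‖u‖` is at most the average of the `‖Pᵢ u‖ ≤ ‖u‖`, so `‖Pᵢ u‖ = ‖u‖` for every `i`.
    have hsum : ∑ i, ‖(K i).starProjection u‖ = ∑ _i : ι, ‖u‖ := by
      refine le_antisymm (Finset.sum_le_sum hle) ?_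
      calc ∑ _i : ι, ‖u‖ = Fintype.card ι * ‖averageStarProjection K u‖ := by simp [h]
        _ ≤ ∑ i, ‖(K i).starProjection u‖ := by
          rw [averageStarProjection_apply, norm_smul, norm_inv, RCLike.norm_natCast, ← mul_assoc,
            mul_inv_cancel₀ (by exact_mod_cast hcard), one_mul]
          exact norm_sum_le _ _
    intro i
    exact ((K i).mem_iff_norm_starProjection u).mpr
      ((Finset.sum_eq_sum_iff_of_le hle).mp hsum i (Finset.mem_univ i))
  · intro h
    simp [averageStarProjection_apply, Submodule.starProjection_eq_self_iff.mpr (h _),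
      ← Nat.cast_smul_eq_nsmul 𝕜, smul_smul, hcard]

theorem tendsto_averageStarProjection_pow_apply [CompleteSpace E] [Nonempty ι]
    (L : Submodule 𝕜 E) [L.HasOrthogonalProjection] (hL : L = ⨅ i, K i) (u : E) :
    Tendsto (fun k => (averageStarProjection K ^ k) u) atTop (𝓝 (L.starProjection u)) := by
  refine (isPositive_averageStarProjection K).tendsto_pow_apply_starProjection ?_ L
    (fun v => ?_) u
  · rw [one_sub_averageStarProjection]
    exact isPositive_averageStarProjection _
  · rw [averageStarProjection_apply_eq_self_iff, hL, Submodule.mem_iInf]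

end AverageStarProjection

theorem EuclideanGeometry.coe_orthogonalProjection_eq_starProjection_vadd {𝕜 V P : Type*}
    [RCLike 𝕜] [NormedAddCommGroup V] [InnerProductSpace 𝕜 V] [MetricSpace P]
    [NormedAddTorsor V P] (s : AffineSubspace 𝕜 P) [Nonempty s]
    [s.direction.HasOrthogonalProjection] {z : P} (hz : z ∈ s) (p : P) :
    (orthogonalProjection s p : P) = s.direction.starProjection (p -ᵥ z) +ᵥ z := by
  rw [orthogonalProjection_apply_mem s hz, Submodule.starProjection_apply]

theorem stmt19_general {H : Type*} [NormedAddCommGroup H] [InnerProductSpace ℝ H]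
    [CompleteSpace H] {N : ℕ} (hN : 0 < N)
    (C : Fin N → AffineSubspace ℝ H)
    [∀ i, Nonempty (C i)] [∀ i, Submodule.HasOrthogonalProjection (C i).direction]
    [Nonempty (⨅ i, C i : AffineSubspace ℝ H)]
    [Submodule.HasOrthogonalProjection (⨅ i, C i : AffineSubspace ℝ H).direction]
    (Q : H → H)
    (hQ : ∀ x, Q x = (N : ℝ)⁻¹ •
      ∑ i, (EuclideanGeometry.orthogonalProjection (C i) x : H))
    (x : H) :
    Filter.Tendsto (fun k : ℕ => Q^[k] x) Filter.atTop
      (nhds (EuclideanGeometry.orthogonalProjection (⨅ i, C i) x : H)) := by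
  have : Nonempty (Fin N) := ⟨⟨0, hN⟩⟩
  obtain ⟨⟨z, hz⟩⟩ := ‹Nonempty (⨅ i, C i : AffineSubspace ℝ H)›
  have hzC : ∀ i, z ∈ C i := (AffineSubspace.mem_iInf_iff C z).mp hz
  set T := averageStarProjection fun i => (C i).direction
  have hQT : ∀ y, Q y = T (y - z) + z := fun y => by
    simp [T, hQ, averageStarProjection_apply, Finset.sum_add_distrib,
      EuclideanGeometry.coe_orthogonalProjection_eq_starProjection_vadd _ (hzC _), smul_add,
      ← Nat.cast_smul_eq_nsmul ℝ, smul_smul, hN.ne']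
  simp only [T.iterate_apply_eq_pow_apply_sub_add hQT,
    EuclideanGeometry.coe_orthogonalProjection_eq_starProjection_vadd _ hz, vsub_eq_sub,
    vadd_eq_add]
  exact (tendsto_averageStarProjection_pow_apply _ _
    (AffineSubspace.direction_iInf_of_mem C z hzC) (x - z)).add_const z

/-- For closed affine subspaces `C₁, …, C_N` with nonempty intersection and
`Q := (1/N)(P_{C₁} + ⋯ + P_{C_N})`, the iterates `Q^k x` converge strongly to
the projection of `x` onto `∩ᵢ Cᵢ`. -/
theorem stmt19 {H : Type*} [NormedAddCommGroup H] [InnerProductSpace ℝ H]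
    [CompleteSpace H] {N : ℕ} (hN : 0 < N)
    (C : Fin N → AffineSubspace ℝ H)
    [∀ i, Nonempty (C i)] [∀ i, Submodule.HasOrthogonalProjection (C i).direction]
    (hcl : ∀ i, IsClosed ((C i : Set H)))
    (z₀ : H) (hz₀ : ∀ i, z₀ ∈ C i)
    [Nonempty (⨅ i, C i : AffineSubspace ℝ H)]
    [Submodule.HasOrthogonalProjection (⨅ i, C i : AffineSubspace ℝ H).direction]
    (Q : H → H)
    (hQ : ∀ x, Q x = (N : ℝ)⁻¹ •
      ∑ i, (EuclideanGeometry.orthogonalProjection (C i) x : H))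
    (x : H) :
    Filter.Tendsto (fun k : ℕ => Q^[k] x) Filter.atTop
      (nhds (EuclideanGeometry.orthogonalProjection (⨅ i, C i) x : H)) :=
  stmt19_general hN C Q hQ x
end
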